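/- For all n ≥ 2, the colon ideal (Iₙ : x₃^{q+m}) is contained in I_{n-1}. -/

import Mathlib

open MvPolynomial

/-- The monomial ideal `J = (x₂², x₂x₃^{q+m}, x₃^{q+m+1})` of `T = k[x₂,x₃]`
(here `X 0 = x₂`, `X 1 = x₃`). -/
noncomputable def Jideal (k : Type*) [Field k] (q m : ℕ) : Ideal (MvPolynomial (Fin 2) k) :=
  Ideal.span {X 0 ^ 2, X 0 * X 1 ^ (q+m), X 1 ^ (q+m+1)}

/-- The monomial ideal `F = (x₃^{2(q+m)+1})` of `T`. -/
noncomputable def Fideal (k : Type*) [Field k] (q m : ℕ) : Ideal (MvPolynomial (Fin 2) k) :=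
  Ideal.span {X 1 ^ (2*(q+m)+1)}

/-- `Iₙ = Σ_{n₁+2n₂=n} F^{n₂} J^{n₁}`. -/
noncomputable def Iideal (k : Type*) [Field k] (q m n : ℕ) : Ideal (MvPolynomial (Fin 2) k) :=
  ⨆ (c : ℕ × ℕ) (_ : c.1 + 2 * c.2 = n), (Fideal k q m) ^ c.2 * (Jideal k q m) ^ c.1

/-!
Write `a = q + m`. Since `J = (x₂²) + x₃^a (x₂, x₃)` and `F = x₃^a · x₃^{a+1}` with
`x₃^{a+1} ∈ J`, the recursion `I_{n+1} ⊆ J Iₙ + F I_{n-1}` gives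
`I_{n+1} ⊆ x₂² Iₙ + x₃^a Iₙ`. If `f x₃^a = x₂² g + x₃^a h` with `g, h ∈ Iₙ`, then `x₃^a`
divides `g`, say `g = x₃^a g'`, so `g' ∈ (Iₙ : x₃^a) ⊆ I_{n-1}` by induction and
`f = x₂² g' + h ∈ J I_{n-1} + Iₙ ⊆ Iₙ`. The induction starts from `I₀ = T`.
-/

open Ideal

theorem Ideal.colon_span_singleton_le_of_le_sup {R : Type*} [CommRing R] [IsDomain R]
    [DecompositionMonoid R] {I K L : Ideal R} {u v : R} (hv : v ≠ 0) (huv : IsRelPrime v u)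
    (hI : I ≤ span {u} * K ⊔ span {v} * K) (hL : span {u} * L ≤ K)
    (hK : K.colon (span {v}) ≤ L) :
    I.colon (span {v}) ≤ K := by
  intro f hf
  obtain ⟨_, hg, _, hh, hfv⟩ := Submodule.mem_sup.mp (hI (mem_colon_span_singleton.mp hf))
  obtain ⟨g, hgK, rfl⟩ := mem_span_singleton_mul.mp hg
  obtain ⟨h, hhK, rfl⟩ := mem_span_singleton_mul.mp hh
  obtain ⟨g', rfl⟩ : v ∣ g := huv.dvd_of_dvd_mul_left ⟨f - h, by linear_combination hfv⟩
  have hg' : g' ∈ L := hK (mem_colon_span_singleton.mpr (by rwa [mul_comm]))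
  have hf : f = u * g' + h := mul_left_cancel₀ hv (by linear_combination -hfv)
  rw [hf]
  exact K.add_mem (hL (mem_span_singleton_mul.mpr ⟨g', hg', rfl⟩)) hhK

section

variable (k : Type*) [Field k] (q m : ℕ)

theorem pow_mul_pow_le_Iideal {n₁ n₂ n : ℕ} (h : n₁ + 2 * n₂ = n) :
    Fideal k q m ^ n₂ * Jideal k q m ^ n₁ ≤ Iideal k q m n :=
  le_iSup₂_of_le (n₁, n₂) h le_rfl

theorem Iideal_zero : Iideal k q m 0 = ⊤ :=
  top_le_iff.mp (by simpa using pow_mul_pow_le_Iideal k q m (n₁ := 0) (n₂ := 0) rfl)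

theorem Jideal_mul_Iideal_le (n : ℕ) :
    Jideal k q m * Iideal k q m n ≤ Iideal k q m (n + 1) := by
  simp only [Iideal, Ideal.mul_iSup]
  refine iSup₂_le fun c hc => ?_
  rw [mul_left_comm, ← pow_succ']
  exact pow_mul_pow_le_Iideal k q m (by omega)

theorem Jideal_mul_le (K : Ideal (MvPolynomial (Fin 2) k)) :
    Jideal k q m * K ≤ span {X 0 ^ 2} * K ⊔ span {X 1 ^ (q + m)} * K := by
  have hle (r : MvPolynomial (Fin 2) k) :
      span {X 1 ^ (q + m) * r} * K ≤ span {X 1 ^ (q + m)} * K := by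
    rw [← span_singleton_mul_span_singleton, mul_assoc]
    exact mul_mono_right mul_le_right
  rw [Jideal, span_insert, span_insert, Ideal.sup_mul, Ideal.sup_mul, mul_comm (X 0), pow_succ]
  exact sup_le le_sup_left (sup_le (le_sup_of_le_right (hle _)) (le_sup_of_le_right (hle _)))

theorem Iideal_succ_le (n : ℕ) :
    Iideal k q m (n + 1) ≤
      span {X 0 ^ 2} * Iideal k q m n ⊔ span {X 1 ^ (q + m)} * Iideal k q m n := by
  refine iSup₂_le fun ⟨n₁, n₂⟩ hc => ?_
  dsimp only at hc ⊢
  rcases n₁ with _ | n₁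
  · obtain ⟨n₂, rfl⟩ : ∃ n', n₂ = n' + 1 := ⟨n₂ - 1, by omega⟩
    have hF : Fideal k q m = span {X 1 ^ (q + m)} * span {X 1 ^ (q + m + 1)} := by
      rw [Fideal, span_singleton_mul_span_singleton, ← pow_add]
      ring_nf
    have hJ : span {(X 1 : MvPolynomial (Fin 2) k) ^ (q + m + 1)} ≤ Jideal k q m :=
      span_le.mpr (by simpa [Jideal] using subset_span (by simp))
    rw [pow_zero, mul_one, pow_succ']
    nth_rw 1 [hF]
    rw [mul_assoc]
    refine le_sup_of_le_right (mul_mono_right ((mul_mono_left hJ).trans ?_))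
    simpa [mul_comm] using pow_mul_pow_le_Iideal k q m (n₁ := 1) (n₂ := n₂) (n := n) (by omega)
  · rw [pow_succ', mul_left_comm]
    exact (mul_mono_right (pow_mul_pow_le_Iideal k q m (n := n) (by omega))).trans
      (Jideal_mul_le k q m _)

theorem colon_Iideal_succ_le (n : ℕ) :
    (Iideal k q m (n + 1)).colon (span {(X 1 : MvPolynomial (Fin 2) k) ^ (q + m)}) ≤
      Iideal k q m n := by
  induction n with
  | zero => simp [Iideal_zero]
  | succ n ih =>
    refine colon_span_singleton_le_of_le_sup (pow_ne_zero _ (X_ne_zero 1)) ?_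
      (Iideal_succ_le k q m _) ?_ ih
    · exact (X_prime.irreducible.isRelPrime_iff_not_dvd.mpr (by rw [X_dvd_X]; decide)).pow
    · have hJ : span {(X 0 : MvPolynomial (Fin 2) k) ^ 2} ≤ Jideal k q m :=
        span_le.mpr (by simpa [Jideal] using subset_span (by simp))
      exact (mul_mono_left hJ).trans (Jideal_mul_Iideal_le k q m n)

end

theorem statement5_general (k : Type*) [Field k] (q m : ℕ) :
    ∀ n : ℕ, 2 ≤ n →
      Submodule.colon (Iideal k q m n)
          (Ideal.span {(X 1 : MvPolynomial (Fin 2) k) ^ (q+m)})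
        ≤ Iideal k q m (n-1) := by
  intro n hn
  obtain ⟨n, rfl⟩ : ∃ n', n = n' + 1 := ⟨n - 1, by omega⟩
  exact colon_Iideal_succ_le k q m n

/-- For all `n ≥ 2`, `(Iₙ : x₃^{q+m}) ⊆ I_{n-1}`. -/
theorem statement5 (k : Type*) [Field k] (q m : ℕ) (hq : 1 ≤ q) (hm : 1 ≤ m) :
    ∀ n : ℕ, 2 ≤ n →
      Submodule.colon (Iideal k q m n)
          (Ideal.span {(X 1 : MvPolynomial (Fin 2) k) ^ (q+m)})
        ≤ Iideal k q m (n-1) :=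
  statement5_general k q m
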